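/- Let (M, ·) be a monoid equipped with an integral connectivity structure κ on M. Then the following are equivalent: (i) for all A, B ∈ κ, the set A·B = {a·b : a ∈ A, b ∈ B} belongs to κ (i.e., (M, ·, κ) is a connective monoid); (ii) for every x ∈ M and every K ∈ κ, both x·K = {x·k : k ∈ K} and K·x = {k·x : k ∈ K} belong to κ (i.e., all left and right translations are connective). -/
import Mathlib


/-- A connectivity structure on `M`. -/
def IsConnectivity {M : Type*} (κ : Set (Set M)) : Prop :=
  ∅ ∈ κ ∧ ∀ ℐ ⊆ κ, (⋂₀ ℐ).Nonempty → ⋃₀ ℐ ∈ κ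

/-- Integral: every singleton is connected. -/
def IsIntegralCnct {M : Type*} (κ : Set (Set M)) : Prop :=
  ∀ x : M, {x} ∈ κ

/-- A monoid equipped with an integral connectivity structure is a connective monoid
(products of connected sets are connected) iff all left and right translations are
connective. -/
theorem connective_monoid_iff_translations_connective
    {M : Type*} [Monoid M] (κ : Set (Set M))
    (hκ : IsConnectivity κ) (hint : IsIntegralCnct κ) :
    (∀ A ∈ κ, ∀ B ∈ κ, {m : M | ∃ a ∈ A, ∃ b ∈ B, m = a * b} ∈ κ) ↔
    (∀ x : M, ∀ K ∈ κ,
      {m : M | ∃ k ∈ K, m = x * k} ∈ κ ∧ {m : M | ∃ k ∈ K, m = k * x} ∈ κ) := by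
  constructor
  · intro h x K hK
    constructor
    · have := h {x} (hint x) K hK
      convert this using 1
      ext m; simp [eq_comm]
    · have := h K hK {x} (hint x)
      convert this using 1
      ext m; simp [eq_comm]
  · intro h A hA B hB
    rcases Set.eq_empty_or_nonempty A with rfl | ⟨a0, ha0⟩
    · convert hκ.1 using 1; ext m; simp
    rcases Set.eq_empty_or_nonempty B with rfl | ⟨b0, hb0⟩
    · convert hκ.1 using 1; ext m; simp
    -- For each a ∈ A, the set aB ∪ Ab0 is connected
    have hAb0 : {m : M | ∃ k ∈ A, m = k * b0} ∈ κ := (h b0 A hA).2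
    have key : ∀ a ∈ A, ({m : M | ∃ b ∈ B, m = a * b} ∪ {m : M | ∃ k ∈ A, m = k * b0}) ∈ κ := by
      intro a ha
      have haB : {m : M | ∃ b ∈ B, m = a * b} ∈ κ := (h a B hB).1
      have := hκ.2 {{m : M | ∃ b ∈ B, m = a * b}, {m : M | ∃ k ∈ A, m = k * b0}}
        (by intro S hS; rcases hS with rfl | rfl; exacts [haB, hAb0])
        ⟨a * b0, by simp only [Set.sInter_insert, Set.sInter_singleton, Set.mem_inter_iff]
                    exact ⟨⟨b0, hb0, rfl⟩, ⟨a, ha, rfl⟩⟩⟩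
      simpa using this
    have := hκ.2 {S | ∃ a ∈ A, S = {m : M | ∃ b ∈ B, m = a * b} ∪ {m : M | ∃ k ∈ A, m = k * b0}}
      (by rintro S ⟨a, ha, rfl⟩; exact key a ha)
      ⟨a0 * b0, by rintro S ⟨a, ha, rfl⟩; exact Or.inr ⟨a0, ha0, rfl⟩⟩
    convert this using 1
    ext m
    constructor
    · rintro ⟨a, ha, b, hb, rfl⟩
      exact ⟨_, ⟨a, ha, rfl⟩, Or.inl ⟨b, hb, rfl⟩⟩
    · rintro ⟨S, ⟨a, ha, rfl⟩, hm⟩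
      rcases hm with ⟨b, hb, rfl⟩ | ⟨k, hk, rfl⟩
      · exact ⟨a, ha, b, hb, rfl⟩
      · exact ⟨k, hk, b0, hb0, rfl⟩
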